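/- For any integer k ≥ 1 and finitely supported functions f₁,f₁',…,f_k,f_k' : G → ℂ on an abelian group, |Σ_x (f₁∘f₁')(x)⋯(f_k∘f_k')(x)| ≤ ∏_{j=1}^k ‖|f_j|‖_{E_k} · ‖|f_j'|‖_{E_k}, where (f∘g)(x) := Σ_y \overline{f(y)}g(y+x) and ‖g‖_{E_k} := (Σ_x ((g∘g)(x))^k)^{1/(2k)} for nonnegative g. -/

import Mathlib

open Finset

/-- Correlation with conjugation: `(f ∘ g)(x) = Σ_y conj(f(y)) g(y + x)`. -/
noncomputable def corrC {G : Type*} [AddCommGroup G] (f g : G → ℂ) : G → ℂ :=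
  fun x => ∑ᶠ y : G, (starRingEnd ℂ) (f y) * g (y + x)

/-- The `E_k` norm of a (nonnegative real-valued) function. -/
noncomputable def normEk {G : Type*} [AddCommGroup G] (k : ℕ) (h : G → ℝ) : ℝ :=
  (∑ᶠ x : G, (∑ᶠ y : G, h y * h (y + x)) ^ k) ^ ((1 : ℝ) / (2 * k))

/-!
Bounding each correlation by the correlation of the absolute values and applying Hölder's
inequality with `k` exponents equal to `k`, it suffices to show
`(Σ_x (g ∘ g')(x) ^ k) ^ 2 ≤ (Σ_x (g ∘ g)(x) ^ k) (Σ_x (g' ∘ g')(x) ^ k)`.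
Expanding the `k`-th power, `Σ_x (g ∘ g')(x) ^ k = Σ_{p ~ q} ∏ g (p i) ∏ g' (q i)`, where two
`k`-tuples are related when their difference is a constant tuple, i.e. when they have the same
`offsets`. Grouping the tuples by their offsets `e` writes this as `Σ_e P_g(e) P_{g'}(e)` with
`P_g(e) = Σ_{offsets p = e} ∏ g (p i)`, and Cauchy–Schwarz in `e` concludes.
-/

open Function Fintype
open scoped Pointwise

theorem prod_le_inv_card_mul_sum_pow {ι : Type*} [Fintype ι] [Nonempty ι] {a : ι → ℝ}
    (ha : ∀ j, 0 ≤ a j) :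
    ∏ j, a j ≤ (card ι : ℝ)⁻¹ * ∑ j, a j ^ card ι := by
  set n := card ι
  have hn : n ≠ 0 := card_ne_zero
  calc ∏ j, a j = ∏ j, (a j ^ n) ^ (n : ℝ)⁻¹ :=
        prod_congr rfl fun j _ => (Real.pow_rpow_inv_natCast (ha j) hn).symm
    _ ≤ ∑ j, (n : ℝ)⁻¹ * a j ^ n :=
        Real.geom_mean_le_arith_mean_weighted univ _ _ (fun _ _ => by positivity)
          (by simp [n, hn]) (fun j _ => pow_nonneg (ha j) n)
    _ = (n : ℝ)⁻¹ * ∑ j, a j ^ n := (mul_sum _ _ _).symm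

theorem sum_prod_le_prod_sum_pow_rpow {ι α : Type*} [Fintype ι] [Nonempty ι] (s : Finset α)
    {u : ι → α → ℝ} (hu : ∀ j, ∀ x ∈ s, 0 ≤ u j x) :
    ∑ x ∈ s, ∏ j, u j x ≤ ∏ j, (∑ x ∈ s, u j x ^ card ι) ^ (card ι : ℝ)⁻¹ := by
  set n := card ι
  have hn : n ≠ 0 := card_ne_zero
  set N : ι → ℝ := fun j => (∑ x ∈ s, u j x ^ n) ^ (n : ℝ)⁻¹
  have hsum_nonneg : ∀ j, 0 ≤ ∑ x ∈ s, u j x ^ n :=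
    fun j => sum_nonneg fun x hx => pow_nonneg (hu j x hx) n
  by_cases hzero : ∃ j, N j = 0
  · obtain ⟨j, hj⟩ := hzero
    have hu0 : ∀ x ∈ s, u j x = 0 := by
      have := (Real.rpow_eq_zero (hsum_nonneg j) (by positivity)).1 hj
      exact fun x hx => pow_eq_zero_iff hn |>.1 <|
        (sum_eq_zero_iff_of_nonneg fun x hx => pow_nonneg (hu j x hx) n).1 this x hx
    rw [sum_eq_zero fun x hx => prod_eq_zero (mem_univ j) (hu0 x hx)]
    exact prod_nonneg fun j _ => Real.rpow_nonneg (hsum_nonneg j) _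
  push Not at hzero
  have hN : ∀ j, 0 < N j := fun j => (Real.rpow_nonneg (hsum_nonneg j) _).lt_of_ne' (hzero j)
  have hnormalized : ∀ j, ∑ x ∈ s, (u j x / N j) ^ n = 1 := fun j => by
    have hNn : N j ^ n = ∑ x ∈ s, u j x ^ n := Real.rpow_inv_natCast_pow (hsum_nonneg j) hn
    simp_rw [div_pow]
    rw [← sum_div, ← hNn, div_self (pow_ne_zero n (hN j).ne')]
  have hprod : ∏ j, N j ≠ 0 := prod_ne_zero_iff.2 fun j _ => (hN j).ne'
  calc ∑ x ∈ s, ∏ j, u j x = (∏ j, N j) * ∑ x ∈ s, ∏ j, u j x / N j := by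
        simp only [prod_div_distrib, mul_sum, mul_div_cancel₀ _ hprod]
    _ ≤ (∏ j, N j) * ∑ x ∈ s, (n : ℝ)⁻¹ * ∑ j, (u j x / N j) ^ n := by
        refine mul_le_mul_of_nonneg_left (sum_le_sum fun x hx => ?_)
          (prod_nonneg fun j _ => (hN j).le)
        exact prod_le_inv_card_mul_sum_pow fun j => div_nonneg (hu j x hx) (hN j).le
    _ = ∏ j, N j := by
        rw [← mul_sum, sum_comm]
        simp [hnormalized, n, hn]

theorem finite_support_prod {ι α R : Type*} [Fintype ι] [CommMonoidWithZero R]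
    {u : ι → α → R} (j : ι) (hj : (support (u j)).Finite) :
    (support fun x => ∏ i, u i x).Finite :=
  hj.subset <| (support_prod_subset _ _).trans
    (Set.biInter_subset_of_mem (mem_coe.2 (mem_univ j)))

theorem finsum_prod_le_prod_finsum_pow_rpow {ι α : Type*} [Fintype ι] [Nonempty ι]
    {u : ι → α → ℝ} (hu : ∀ j x, 0 ≤ u j x) (hfin : ∀ j, (support (u j)).Finite) :
    ∑ᶠ x, ∏ j, u j x ≤ ∏ j, (∑ᶠ x, u j x ^ card ι) ^ (card ι : ℝ)⁻¹ := by
  classical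
  set S := univ.biUnion fun j => (hfin j).toFinset
  have hS : ∀ j, support (u j) ⊆ S := fun j x hx =>
    mem_coe.2 (mem_biUnion.2 ⟨j, mem_univ j, (hfin j).mem_toFinset.2 hx⟩)
  have j₀ : ι := Classical.arbitrary ι
  rw [finsum_eq_sum_of_support_subset _ ((support_prod_subset _ _).trans
    ((Set.biInter_subset_of_mem (mem_coe.2 (mem_univ j₀))).trans (hS j₀)))]
  simp only [fun j => finsum_eq_sum_of_support_subset (fun x => u j x ^ card ι)
    ((support_pow _ card_ne_zero).le.trans (hS j))]
  exact sum_prod_le_prod_sum_pow_rpow S fun j x _ => hu j x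

theorem norm_finsum_le_finsum {α E : Type*} [NormedAddCommGroup E] {F : α → E} {B : α → ℝ}
    (hB : (support B).Finite) (hFB : ∀ x, ‖F x‖ ≤ B x) : ‖∑ᶠ x, F x‖ ≤ ∑ᶠ x, B x := by
  have hF : support F ⊆ hB.toFinset := fun x hx => hB.mem_toFinset.2 fun h0 =>
    hx (norm_le_zero_iff.1 (h0 ▸ hFB x))
  rw [finsum_eq_sum_of_support_subset _ hF,
    finsum_eq_sum_of_support_subset _ hB.coe_toFinset.ge]
  exact (norm_sum_le _ _).trans (sum_le_sum fun x _ => hFB x)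

section Fibers

variable {α β : Type*} [DecidableEq β] (S : Finset α) (π : α → β)

theorem sum_sum_fiber_mul_eq_sum_image {R : Type*} [CommSemiring R] (u v : α → R) :
    ∑ p ∈ S, ∑ q ∈ S with π q = π p, u p * v q
      = ∑ e ∈ S.image π, (∑ p ∈ S with π p = e, u p) * ∑ q ∈ S with π q = e, v q := by
  refine (sum_image' _ fun p _ => ?_).symm
  rw [sum_mul]
  exact sum_congr rfl fun p' hp' => by rw [(mem_filter.1 hp').2, mul_sum]

theorem sq_sum_sum_fiber_mul_le {R : Type*} [CommRing R] [LinearOrder R] [IsStrictOrderedRing R]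
    (u v : α → R) :
    (∑ p ∈ S, ∑ q ∈ S with π q = π p, u p * v q) ^ 2
      ≤ (∑ p ∈ S, ∑ q ∈ S with π q = π p, u p * u q)
        * ∑ p ∈ S, ∑ q ∈ S with π q = π p, v p * v q := by
  simp only [sum_sum_fiber_mul_eq_sum_image, ← sq]
  exact sum_mul_sq_le_sq_mul_sq _ _ _

end Fibers

section Correlation

variable {G R : Type*} [AddCommGroup G]

/-- The paper's `g ∘ g'` without conjugation; `normEk k h` is by definition
`(∑ᶠ x, corr h h x ^ k) ^ (1 / (2 * k))`. -/
noncomputable def corr [Semiring R] (g g' : G → R) (x : G) : R := ∑ᶠ y, g y * g' (y + x)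

theorem corr_eq_sum [Semiring R] {g : G → R} {A : Finset G} (hg : support g ⊆ A) (g' : G → R)
    (x : G) : corr g g' x = ∑ y ∈ A, g y * g' (y + x) :=
  finsum_eq_sum_of_support_subset _ ((support_mul_subset_left _ _).trans hg)

theorem corr_nonneg [Semiring R] [PartialOrder R] [IsOrderedRing R] {g g' : G → R}
    (hg : ∀ y, 0 ≤ g y) (hg' : ∀ y, 0 ≤ g' y) (x : G) : 0 ≤ corr g g' x :=
  finsum_nonneg fun y => mul_nonneg (hg y) (hg' _)

theorem support_corr_subset [Semiring R] [DecidableEq G] {g g' : G → R} {A B : Finset G}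
    (hg : support g ⊆ A) (hg' : support g' ⊆ B) : support (corr g g') ⊆ ↑(B - A) := by
  intro x hx
  rw [mem_support, corr_eq_sum hg] at hx
  obtain ⟨y, hy, hne⟩ := exists_ne_zero_of_sum_ne_zero hx
  exact mem_coe.2 <| add_sub_cancel_left y x ▸ sub_mem_sub (hg' (right_ne_zero_of_mul hne)) hy

theorem finite_support_corr [Semiring R] {g g' : G → R} (hg : (support g).Finite)
    (hg' : (support g').Finite) : (support (corr g g')).Finite := by
  classical
  exact (finite_toSet _).subset (support_corr_subset hg.coe_toFinset.ge hg'.coe_toFinset.ge)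

theorem norm_corrC_le {f : G → ℂ} (hf : (support f).Finite) (f' : G → ℂ) (x : G) :
    ‖corrC f f' x‖ ≤ corr (fun t => ‖f t‖) (fun t => ‖f' t‖) x := by
  have hf_norm : support (fun t => ‖f t‖) ⊆ hf.toFinset := by
    rw [show (fun t => ‖f t‖) = norm ∘ f from rfl, support_comp_eq norm norm_eq_zero f]
    exact hf.coe_toFinset.ge
  have hf_conj : support (fun y => starRingEnd ℂ (f y)) ⊆ hf.toFinset := by simp
  rw [corr_eq_sum hf_norm, corrC,
    finsum_eq_sum_of_support_subset _ ((support_mul_subset_left _ _).trans hf_conj)]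
  exact (norm_sum_le _ _).trans_eq (sum_congr rfl fun y _ => by rw [norm_mul, Complex.norm_conj])

def offsets {k : ℕ} [NeZero k] (p : Fin k → G) : Fin k → G := fun i => p i - p 0

theorem sum_translate_eq_sum_offsets_eq [DecidableEq G] [AddCommMonoid R] {k : ℕ} [NeZero k]
    {A : Finset G} {H : (Fin k → G) → R} (hH : support H ⊆ ↑(piFinset fun _ : Fin k => A))
    {p : Fin k → G} (hp : p ∈ piFinset fun _ => A) :
    ∑ x ∈ A - A, H (fun i => p i + x)
      = ∑ q ∈ piFinset (fun _ => A) with offsets q = offsets p, H q := by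
  refine sum_bij_ne_zero (fun x _ _ i => p i + x) (fun x _ hx => mem_filter.2 ⟨hH hx, ?_⟩)
    (fun x₁ _ _ x₂ _ _ h => by simpa using congrFun h 0) (fun q hq _ => ?_) (fun _ _ _ => rfl)
  · funext i
    simp [offsets]
  · obtain ⟨hqA, hq⟩ := mem_filter.1 hq
    have hq_translate : (fun i => p i + (q 0 - p 0)) = q := funext fun i => by
      have := congrFun hq i
      simp only [offsets] at this
      rw [← sub_add_cancel (q i) (q 0), this]
      abel
    refine ⟨q 0 - p 0, sub_mem_sub (mem_piFinset.1 hqA 0) (mem_piFinset.1 hp 0), ?_,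
      hq_translate⟩
    rwa [hq_translate]

theorem finsum_corr_pow_eq_sum_offsets [CommSemiring R] [DecidableEq G] {k : ℕ} [NeZero k]
    {g g' : G → R} {A : Finset G} (hg : support g ⊆ A) (hg' : support g' ⊆ A) :
    ∑ᶠ x, corr g g' x ^ k
      = ∑ p ∈ piFinset (fun _ : Fin k => A), ∑ q ∈ piFinset (fun _ => A) with offsets q = offsets p,
          (∏ i, g (p i)) * ∏ i, g' (q i) := by
  have hsupp : support (fun x => corr g g' x ^ k) ⊆ ↑(A - A) := fun x hx =>
    support_corr_subset hg hg' fun h0 => hx (by simp [h0, zero_pow (NeZero.ne k)])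
  have hg'_prod : support (fun q : Fin k → G => ∏ i, g' (q i)) ⊆ ↑(piFinset fun _ : Fin k => A) :=
    fun q hq => mem_coe.2 <| mem_piFinset.2 fun i => hg' fun h0 => hq (prod_eq_zero (mem_univ i) h0)
  rw [finsum_eq_sum_of_support_subset _ hsupp]
  calc ∑ x ∈ A - A, corr g g' x ^ k
      = ∑ x ∈ A - A, ∑ p ∈ piFinset (fun _ : Fin k => A), ∏ i, g (p i) * g' (p i + x) := by
        refine sum_congr rfl fun x _ => ?_
        rw [corr_eq_sum hg, ← Fin.prod_const, prod_univ_sum]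
    _ = ∑ p ∈ piFinset (fun _ : Fin k => A), (∏ i, g (p i)) * ∑ x ∈ A - A, ∏ i, g' (p i + x) := by
        rw [sum_comm]
        simp only [prod_mul_distrib, mul_sum]
    _ = _ := sum_congr rfl fun p hp => by
        rw [sum_translate_eq_sum_offsets_eq hg'_prod hp, mul_sum]

theorem sq_finsum_corr_pow_le [CommRing R] [LinearOrder R] [IsStrictOrderedRing R]
    {k : ℕ} (hk : k ≠ 0) {g g' : G → R} (hg : (support g).Finite) (hg' : (support g').Finite) :
    (∑ᶠ x, corr g g' x ^ k) ^ 2 ≤ (∑ᶠ x, corr g g x ^ k) * ∑ᶠ x, corr g' g' x ^ k := by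
  classical
  have : NeZero k := ⟨hk⟩
  have hgA : support g ⊆ ↑(hg.toFinset ∪ hg'.toFinset) := by simp
  have hg'A : support g' ⊆ ↑(hg.toFinset ∪ hg'.toFinset) := by simp
  rw [finsum_corr_pow_eq_sum_offsets hgA hg'A, finsum_corr_pow_eq_sum_offsets hgA hgA,
    finsum_corr_pow_eq_sum_offsets hg'A hg'A]
  exact sq_sum_sum_fiber_mul_le _ _ _ _

theorem rpow_finsum_corr_pow_le_normEk_mul_normEk {k : ℕ} (hk : k ≠ 0) {g g' : G → ℝ}
    (hg_nonneg : ∀ t, 0 ≤ g t) (hg'_nonneg : ∀ t, 0 ≤ g' t)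
    (hg : (support g).Finite) (hg' : (support g').Finite) :
    (∑ᶠ x, corr g g' x ^ k) ^ (k : ℝ)⁻¹ ≤ normEk k g * normEk k g' := by
  have hsum_nonneg : ∀ {h h' : G → ℝ}, (∀ t, 0 ≤ h t) → (∀ t, 0 ≤ h' t) →
      0 ≤ ∑ᶠ x, corr h h' x ^ k := fun hh hh' =>
    finsum_nonneg fun x => pow_nonneg (corr_nonneg hh hh' x) k
  calc (∑ᶠ x, corr g g' x ^ k) ^ (k : ℝ)⁻¹
      = ((∑ᶠ x, corr g g' x ^ k) ^ 2) ^ ((1 : ℝ) / (2 * k)) := by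
        rw [← Real.rpow_natCast _ 2, ← Real.rpow_mul (hsum_nonneg hg_nonneg hg'_nonneg)]
        congr 1
        push_cast
        field_simp
    _ ≤ ((∑ᶠ x, corr g g x ^ k) * ∑ᶠ x, corr g' g' x ^ k) ^ ((1 : ℝ) / (2 * k)) :=
        Real.rpow_le_rpow (sq_nonneg _) (sq_finsum_corr_pow_le hk hg hg') (by positivity)
    _ = normEk k g * normEk k g' :=
        Real.mul_rpow (hsum_nonneg hg_nonneg hg_nonneg) (hsum_nonneg hg'_nonneg hg'_nonneg)

end Correlation

theorem stmt_11 {G : Type*} [AddCommGroup G] (k : ℕ) (hk : 1 ≤ k)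
    (f f' : Fin k → G → ℂ)
    (hf : ∀ j, (Function.support (f j)).Finite)
    (hf' : ∀ j, (Function.support (f' j)).Finite) :
    ‖∑ᶠ x : G, ∏ j : Fin k, corrC (f j) (f' j) x‖
      ≤ ∏ j : Fin k,
          normEk k (fun t => ‖f j t‖) * normEk k (fun t => ‖f' j t‖) := by
  have : Nonempty (Fin k) := ⟨⟨0, hk⟩⟩
  have hsupp_norm : ∀ h : G → ℂ, support (fun t => ‖h t‖) = support h :=
    support_comp_eq norm norm_eq_zero
  have hfin : ∀ j, (support fun t => ‖f j t‖).Finite := fun j => hsupp_norm (f j) ▸ hf j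
  have hfin' : ∀ j, (support fun t => ‖f' j t‖).Finite := fun j => hsupp_norm (f' j) ▸ hf' j
  set c : Fin k → G → ℝ := fun j => corr (fun t => ‖f j t‖) (fun t => ‖f' j t‖)
  have hc_nonneg : ∀ j x, 0 ≤ c j x := fun j =>
    corr_nonneg (fun _ => norm_nonneg _) fun _ => norm_nonneg _
  have hc_fin : ∀ j, (support (c j)).Finite := fun j => finite_support_corr (hfin j) (hfin' j)
  calc ‖∑ᶠ x, ∏ j, corrC (f j) (f' j) x‖ ≤ ∑ᶠ x, ∏ j, c j x :=
        norm_finsum_le_finsum (finite_support_prod ⟨0, hk⟩ (hc_fin _)) fun x => by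
          rw [norm_prod]
          exact prod_le_prod (fun _ _ => norm_nonneg _) fun j _ => norm_corrC_le (hf j) (f' j) x
    _ ≤ ∏ j, (∑ᶠ x, c j x ^ k) ^ (k : ℝ)⁻¹ := by
        simpa using finsum_prod_le_prod_finsum_pow_rpow hc_nonneg hc_fin
    _ ≤ _ := prod_le_prod
        (fun j _ => Real.rpow_nonneg (finsum_nonneg fun x => pow_nonneg (hc_nonneg j x) k) _)
        fun j _ => rpow_finsum_corr_pow_le_normEk_mul_normEk (by omega)
          (fun _ => norm_nonneg _) (fun _ => norm_nonneg _) (hfin j) (hfin' j)
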